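/- Let 0 < ξ ≤ 10⁻³ and let G be a bipartite graph with bipartition {V₁, V₂}, |V₁| = |V₂| = (2 + 8ξ)k′ (with k′ sufficiently large) and minimum degree δ(G) ≥ (7/8 + ξ)(2 + 8ξ)k′, whose edges are 2-colored red and blue. Let F₁ be a monochromatic connected component of G with the largest number of vertices, assume F₁ is red and contains no matching saturating at least (2 + 0.1ξ)k′ vertices, and let C = V(F₁). If |V_s \ C| ≥ (1/2)(1 + 4ξ)k′ and |C ∩ V_s| ≥ (1 + 4ξ)k′ for each s = 1, 2, then the spanning subgraph of blue edges of G contains a connected matching saturating at least (2 + 8ξ)k′ vertices. -/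

import Mathlib

/-- The spanning subgraph of `G` consisting of the edges with color `i`,
given an edge coloring `χ` (on pairs of vertices) with `r` colors. -/
def colorSubgraph {V : Type*} {r : ℕ} (G : SimpleGraph V) (χ : Sym2 V → Fin r) (i : Fin r) :
    SimpleGraph V where
  Adj u v := G.Adj u v ∧ χ s(u, v) = i
  symm := ⟨fun u v h => ⟨h.1.symm, by rw [Sym2.eq_swap]; exact h.2⟩⟩
  loopless := ⟨fun u h => G.loopless.irrefl u h.1⟩

/-- `G` contains a cycle of length `m` (on `m` vertices) as a subgraph. -/
def HasCycleLength {V : Type*} (G : SimpleGraph V) (m : ℕ) : Prop :=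
  ∃ (v : V) (w : G.Walk v v), w.IsCycle ∧ w.length = m

/-- `G` contains a connected matching (all of whose edges lie in one connected
component of `G`) saturating at least `b` vertices. -/
def HasConnMatching {V : Type*} (G : SimpleGraph V) (b : ℝ) : Prop :=
  ∃ M : G.Subgraph, M.IsMatching ∧
    (∀ u ∈ M.verts, ∀ v ∈ M.verts, G.Reachable u v) ∧ b ≤ (M.verts.ncard : ℝ)

/-!
Every vertex misses at most `t = (1/8 - ξ)(2 + 8ξ)k'` vertices of the opposite side, and `2t` is
smaller than each of `|C ∩ V_s|` and `|V_s \ C|`. Two disjoint sets in which every vertex misses at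
most `t` vertices of the other one, with `2t` below both sizes, lie in one component and, by Hall's
theorem, carry a matching covering the smaller set. Edges between `C` and its complement are blue,
as `C` is a red component, so `(C ∩ V₁, V₂ \ C)` and `(V₁ \ C, C ∩ V₂)` are such pairs in the blue
graph. A blue edge between `C ∩ V₁` and `C ∩ V₂` joins the two pairs, and their matchings form a
connected blue matching on at least `(2 + 8ξ)k'` vertices. Without such an edge all edges between
`C ∩ V₁` and `C ∩ V₂` are red, and the pair yields a red matching in `F₁` on at least
`2(1 + 4ξ)k'` vertices.
-/

open Set

theorem Set.exists_mem_of_ncard_sep_not_lt {α : Type*} {S : Set α} {p : α → Prop}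
    (h : {x ∈ S | ¬ p x}.ncard < S.ncard) : ∃ x ∈ S, p x := by
  by_contra! hS
  rw [sep_eq_self_iff_mem_true.2 hS] at h
  exact h.false

theorem Set.exists_mem_and_of_ncard_add_lt {α : Type*} {S : Set α} {p q : α → Prop}
    (h : {x ∈ S | ¬ p x}.ncard + {x ∈ S | ¬ q x}.ncard < S.ncard) : ∃ x ∈ S, p x ∧ q x := by
  have hS : S.Finite := finite_of_ncard_pos (by omega)
  refine exists_mem_of_ncard_sep_not_lt (lt_of_le_of_lt ?_ h)
  calc {x ∈ S | ¬ (p x ∧ q x)}.ncard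
      ≤ ({x ∈ S | ¬ p x} ∪ {x ∈ S | ¬ q x}).ncard :=
        ncard_le_ncard (fun x ⟨hx, hpq⟩ => by grind) ((hS.sep _).union (hS.sep _))
    _ ≤ _ := ncard_union_le _ _

theorem HasConnMatching.mono {V : Type*} {H : SimpleGraph V} {b b' : ℝ} (h : HasConnMatching H b)
    (hb : b' ≤ b) : HasConnMatching H b' :=
  let ⟨M, hM, hreach, hcard⟩ := h
  ⟨M, hM, hreach, hb.trans hcard⟩

namespace SimpleGraph

variable {V : Type*}

def MissesAtMost (H : SimpleGraph V) (t : ℝ) (A B : Set V) : Prop :=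
  ∀ a ∈ A, ({b ∈ B | ¬ H.Adj a b}.ncard : ℝ) ≤ t

namespace MissesAtMost

variable {H : SimpleGraph V} {t : ℝ} {A B : Set V}

theorem reachable (hAB : H.MissesAtMost t A B) (hBA : H.MissesAtMost t B A)
    (hA : 2 * t < A.ncard) (hB : t < B.ncard) {u v : V} (hu : u ∈ A ∪ B) (hv : v ∈ A ∪ B) :
    H.Reachable u v := by
  have hreachB : ∀ u ∈ A ∪ B, ∃ b ∈ B, H.Reachable u b := by
    rintro u (hu | hu)
    · obtain ⟨b, hb, hub⟩ := exists_mem_of_ncard_sep_not_lt (p := H.Adj u)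
        (by exact_mod_cast (hAB u hu).trans_lt hB)
      exact ⟨b, hb, hub.reachable⟩
    · exact ⟨u, hu, .refl u⟩
  have hreachBB : ∀ b ∈ B, ∀ b' ∈ B, H.Reachable b b' := by
    intro b hb b' hb'
    have hlt : ({a ∈ A | ¬ H.Adj b a}.ncard : ℝ) + {a ∈ A | ¬ H.Adj b' a}.ncard < A.ncard := by
      linarith [hBA b hb, hBA b' hb']
    obtain ⟨a, -, hba, hb'a⟩ := exists_mem_and_of_ncard_add_lt (by exact_mod_cast hlt)
    exact hba.reachable.trans hb'a.reachable.symm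
  obtain ⟨b, hb, hub⟩ := hreachB u hu
  obtain ⟨b', hb', hvb'⟩ := hreachB v hv
  exact hub.trans ((hreachBB b hb b' hb').trans hvb'.symm)

variable [Finite V]

theorem ncard_le_ncard_sep_exists_adj (hAB : H.MissesAtMost t A B) (hBA : H.MissesAtMost t B A)
    (hle : A.ncard ≤ B.ncard) (ht : 2 * t ≤ B.ncard) {S : Set V} (hS : S ⊆ A) :
    S.ncard ≤ {b ∈ B | ∃ a ∈ S, H.Adj a b}.ncard := by
  rcases le_or_gt (S.ncard : ℝ) t with hSt | htS
  · obtain rfl | ⟨a, ha⟩ := S.eq_empty_or_nonempty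
    · simp
    -- a single vertex of `S` already has at least `|B| - t ≥ t ≥ |S|` neighbours in `B`
    have hB : (B.ncard : ℝ) ≤ {b ∈ B | H.Adj a b}.ncard + {b ∈ B | ¬ H.Adj a b}.ncard := by
      exact_mod_cast (ncard_le_ncard fun b hb => by grind).trans (ncard_union_le _ _)
    have hN : {b ∈ B | H.Adj a b}.ncard ≤ {b ∈ B | ∃ a ∈ S, H.Adj a b}.ncard :=
      ncard_le_ncard fun b ⟨hb, hab⟩ => ⟨hb, a, ha, hab⟩
    have hSN : (S.ncard : ℝ) ≤ {b ∈ B | H.Adj a b}.ncard := by linarith [hAB a (hS ha)]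
    exact (Nat.cast_le.1 hSN).trans hN
  · -- once `S` has more than `t` vertices, every vertex of `B` has a neighbour in `S`
    have hNB : {b ∈ B | ∃ a ∈ S, H.Adj a b} = B := by
      refine sep_eq_self_iff_mem_true.2 fun b hb => ?_
      have hlt : {a ∈ S | ¬ H.Adj b a}.ncard < S.ncard := by
        have hsub : {a ∈ S | ¬ H.Adj b a}.ncard ≤ {a ∈ A | ¬ H.Adj b a}.ncard :=
          ncard_le_ncard fun a ⟨ha, hba⟩ => ⟨hS ha, hba⟩
        exact_mod_cast (Nat.cast_le.2 hsub).trans_lt ((hBA b hb).trans_lt htS)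
      obtain ⟨a, ha, hba⟩ := exists_mem_of_ncard_sep_not_lt hlt
      exact ⟨a, ha, hba.symm⟩
    rw [hNB]
    exact (ncard_le_ncard hS).trans hle

theorem exists_isMatching_of_ncard_le (hd : Disjoint A B) (hAB : H.MissesAtMost t A B)
    (hBA : H.MissesAtMost t B A) (hle : A.ncard ≤ B.ncard) (ht : 2 * t ≤ B.ncard) :
    ∃ M : H.Subgraph, M.IsMatching ∧ M.verts ⊆ A ∪ B ∧ M.verts.ncard = 2 * A.ncard := by
  classical
  obtain ⟨f, hf, hfB⟩ := (Finset.all_card_le_biUnion_card_iff_existsInjective'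
      fun a : A => {b ∈ (toFinite B).toFinset | H.Adj a b}).1 fun s => by
    have hHall := hAB.ncard_le_ncard_sep_exists_adj hBA hle ht (S := Subtype.val '' (s : Set A))
      (by simp)
    rw [ncard_image_of_injective _ Subtype.val_injective, ncard_coe_finset] at hHall
    convert hHall
    rw [← ncard_coe_finset]
    congr 1
    ext b
    simp
  simp only [Finset.mem_filter, Finite.mem_toFinset] at hfB
  have hfB' : range f ⊆ B := range_subset_iff.2 fun a => (hfB a).1
  obtain ⟨M, hMverts, hM⟩ := Subgraph.IsMatching.exists_of_disjoint_sets_of_equiv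
    (hd.mono_right hfB') (Equiv.ofInjective f hf) fun a => (hfB a).2
  refine ⟨M, hM, hMverts ▸ union_subset_union_right A hfB', ?_⟩
  rw [hMverts, ncard_union_eq (hd.mono_right hfB'), ncard_range_of_injective hf,
    Nat.card_coe_set_eq, two_mul]

theorem exists_isMatching (hd : Disjoint A B) (hAB : H.MissesAtMost t A B)
    (hBA : H.MissesAtMost t B A) (ht : 2 * t ≤ max A.ncard B.ncard) :
    ∃ M : H.Subgraph, M.IsMatching ∧ M.verts ⊆ A ∪ B ∧
      M.verts.ncard = 2 * min A.ncard B.ncard := by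
  rcases le_total A.ncard B.ncard with hle | hle
  · obtain ⟨M, hM, hsub, hcard⟩ := hAB.exists_isMatching_of_ncard_le hd hBA hle
      (by rwa [max_eq_right hle] at ht)
    exact ⟨M, hM, hsub, by rw [hcard, min_eq_left hle]⟩
  · obtain ⟨M, hM, hsub, hcard⟩ := hBA.exists_isMatching_of_ncard_le hd.symm hAB hle
      (by rwa [max_eq_left hle] at ht)
    exact ⟨M, hM, union_comm A B ▸ hsub, by rw [hcard, min_eq_right hle]⟩

end MissesAtMost

theorem hasConnMatching_of_missesAtMost_of_adj [Finite V] {H : SimpleGraph V} {t : ℝ}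
    {A₁ B₁ A₂ B₂ : Set V} (hd₁ : Disjoint A₁ B₁) (hd₂ : Disjoint A₂ B₂)
    (hd : Disjoint (A₁ ∪ B₁) (A₂ ∪ B₂))
    (h₁ : H.MissesAtMost t A₁ B₁) (h₁' : H.MissesAtMost t B₁ A₁)
    (h₂ : H.MissesAtMost t A₂ B₂) (h₂' : H.MissesAtMost t B₂ A₂)
    (hA₁ : 2 * t < A₁.ncard) (hB₁ : 2 * t < B₁.ncard)
    (hA₂ : 2 * t < A₂.ncard) (hB₂ : 2 * t < B₂.ncard)
    {u v : V} (hu : u ∈ A₁ ∪ B₁) (hv : v ∈ A₂ ∪ B₂) (huv : H.Adj u v) :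
    HasConnMatching H (2 * min A₁.ncard B₁.ncard + 2 * min A₂.ncard B₂.ncard : ℕ) := by
  obtain ⟨M₁, hM₁, hM₁sub, hM₁card⟩ := h₁.exists_isMatching hd₁ h₁'
    (hA₁.le.trans (Nat.cast_le.2 (le_max_left _ _)))
  obtain ⟨M₂, hM₂, hM₂sub, hM₂card⟩ := h₂.exists_isMatching hd₂ h₂'
    (hA₂.le.trans (Nat.cast_le.2 (le_max_left _ _)))
  have hreach : ∀ x ∈ (A₁ ∪ B₁) ∪ (A₂ ∪ B₂), H.Reachable x u := by
    rintro x (hx | hx)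
    · exact h₁.reachable h₁' hA₁ (by linarith) hx hu
    · exact (h₂.reachable h₂' hA₂ (by linarith) hx hv).trans huv.symm.reachable
  have hsub : (M₁ ⊔ M₂).verts ⊆ (A₁ ∪ B₁) ∪ (A₂ ∪ B₂) := union_subset_union hM₁sub hM₂sub
  have hdisj : Disjoint M₁.verts M₂.verts := hd.mono hM₁sub hM₂sub
  refine ⟨M₁ ⊔ M₂, hM₁.sup hM₂ (by rwa [hM₁.support_eq_verts, hM₂.support_eq_verts]),
    fun x hx y hy => (hreach x (hsub hx)).trans (hreach y (hsub hy)).symm, ?_⟩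
  rw [Subgraph.verts_sup, ncard_union_eq hdisj, hM₁card, hM₂card]

theorem missesAtMost_of_neighborSet_subset [Finite V] {G H : SimpleGraph V} {d : ℝ}
    {A B W : Set V} (hW : ∀ a ∈ A, G.neighborSet a ⊆ W) (hBW : B ⊆ W)
    (hd : ∀ a ∈ A, d ≤ (G.neighborSet a).ncard) (hGH : ∀ a ∈ A, ∀ b ∈ B, G.Adj a b → H.Adj a b) :
    H.MissesAtMost (W.ncard - d) A B := by
  intro a ha
  have hsub : {b ∈ B | ¬ H.Adj a b}.ncard ≤ (W \ G.neighborSet a).ncard :=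
    ncard_le_ncard fun b ⟨hb, hab⟩ => ⟨hBW hb, fun h => hab (hGH a ha b hb h)⟩
  have hsplit : ((W \ G.neighborSet a).ncard : ℝ) + (G.neighborSet a).ncard = W.ncard := by
    exact_mod_cast ncard_sdiff_add_ncard_of_subset (hW a ha)
  linarith [hd a ha, (Nat.cast_le (α := ℝ)).2 hsub]

theorem missesAtMost_of_le_completeBipartiteGraph {α β : Type*} [Finite α] [Finite β]
    {G H : SimpleGraph (α ⊕ β)} (hG : G ≤ completeBipartiteGraph α β) {d : ℝ}
    (hd : ∀ v, d ≤ (G.neighborSet v).ncard) {X Y : Set (α ⊕ β)} (hX : X ⊆ range Sum.inl)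
    (hY : Y ⊆ range Sum.inr) (hGH : ∀ x ∈ X, ∀ y ∈ Y, G.Adj x y → H.Adj x y) :
    H.MissesAtMost (Nat.card β - d) X Y ∧ H.MissesAtMost (Nat.card α - d) Y X := by
  have hside : ∀ x y, G.Adj x y → (x.isLeft ↔ y.isRight) := fun x y h => by
    have := hG h
    cases x <;> cases y <;> simp_all
  constructor
  · rw [← ncard_range_of_injective Sum.inr_injective]
    refine missesAtMost_of_neighborSet_subset (fun x hx y hxy => ?_) hY (fun x _ => hd x) hGH
    obtain ⟨a, rfl⟩ := hX hx
    obtain ⟨b, rfl⟩ := Sum.isRight_iff.1 ((hside _ _ hxy).1 rfl)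
    exact mem_range_self b
  · rw [← ncard_range_of_injective Sum.inl_injective]
    refine missesAtMost_of_neighborSet_subset (fun y hy x hyx => ?_) hX (fun y _ => hd y)
      fun y hy x hx hyx => (hGH x hx y hy hyx.symm).symm
    obtain ⟨b, rfl⟩ := hY hy
    obtain ⟨a, rfl⟩ := Sum.isLeft_iff.1 ((hside _ _ hyx.symm).2 rfl)
    exact mem_range_self a

theorem colorSubgraph_adj_zero_or_one {G : SimpleGraph V} {χ : Sym2 V → Fin 2} {u v : V}
    (huv : G.Adj u v) : (colorSubgraph G χ 0).Adj u v ∨ (colorSubgraph G χ 1).Adj u v := by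
  rcases Fin.exists_fin_two.1 ⟨χ s(u, v), rfl⟩ with h | h
  · exact .inl ⟨huv, h⟩
  · exact .inr ⟨huv, h⟩

theorem colorSubgraph_one_adj_of_notMem_supp {G : SimpleGraph V} {χ : Sym2 V → Fin 2}
    {c : (colorSubgraph G χ 0).ConnectedComponent} {u v : V} (hu : u ∉ c.supp)
    (hv : v ∈ c.supp) (huv : G.Adj u v) : (colorSubgraph G χ 1).Adj u v :=
  (colorSubgraph_adj_zero_or_one huv).resolve_left fun h0 =>
    hu (c.mem_supp_of_adj_mem_supp hv h0.symm)

end SimpleGraph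

open SimpleGraph

theorem blue_connected_matching_from_largest_red_component_general (ξ : ℝ) (hξ0 : 0 < ξ) :
    ∃ K₀ : ℝ, ∀ k' : ℝ, K₀ ≤ k' → ∀ N : ℕ, (N : ℝ) = (2 + 8 * ξ) * k' →
      ∀ G : SimpleGraph (Fin N ⊕ Fin N), G ≤ completeBipartiteGraph (Fin N) (Fin N) →
      (∀ v, (7 / 8 + ξ) * ((2 + 8 * ξ) * k') ≤ ((G.neighborSet v).ncard : ℝ)) →
      ∀ χ : Sym2 (Fin N ⊕ Fin N) → Fin 2,
      ∀ c : (colorSubgraph G χ 0).ConnectedComponent,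
        -- `F₁` has the largest number of vertices among all monochromatic components
        (∀ (i : Fin 2) (c' : (colorSubgraph G χ i).ConnectedComponent),
          c'.supp.ncard ≤ c.supp.ncard) →
        -- `F₁` contains no matching saturating at least `(2 + 0.1ξ)k'` vertices
        (¬ ∃ M : (colorSubgraph G χ 0).Subgraph, M.IsMatching ∧ M.verts ⊆ c.supp ∧
          (2 + 0.1 * ξ) * k' ≤ (M.verts.ncard : ℝ)) →
        ((1 / 2) * (1 + 4 * ξ) * k' ≤ ((Set.range (Sum.inl : Fin N → Fin N ⊕ Fin N) \ c.supp).ncard : ℝ)) →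
        ((1 / 2) * (1 + 4 * ξ) * k' ≤ ((Set.range (Sum.inr : Fin N → Fin N ⊕ Fin N) \ c.supp).ncard : ℝ)) →
        ((1 + 4 * ξ) * k' ≤ ((c.supp ∩ Set.range (Sum.inl : Fin N → Fin N ⊕ Fin N)).ncard : ℝ)) →
        ((1 + 4 * ξ) * k' ≤ ((c.supp ∩ Set.range (Sum.inr : Fin N → Fin N ⊕ Fin N)).ncard : ℝ)) →
        HasConnMatching (colorSubgraph G χ 1) ((2 + 8 * ξ) * k') := by
  refine ⟨1, fun k' hk' N hN G hG hδ χ c _ hnoRed hD hE hC₁ hC₂ => ?_⟩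
  have hK : 0 < ξ * k' := mul_pos hξ0 (by linarith)
  have hmiss := fun {H X Y} => @missesAtMost_of_le_completeBipartiteGraph _ _ _ _ G H hG _ hδ X Y
  simp only [Nat.card_fin, hN] at hmiss
  set t := (2 + 8 * ξ) * k' - (7 / 8 + ξ) * ((2 + 8 * ξ) * k')
  have ht : 2 * t < 1 / 2 * (1 + 4 * ξ) * k' := by simp only [t]; nlinarith [mul_pos hξ0 hK]
  by_cases hblue : ∃ u ∈ c.supp ∩ range Sum.inl, ∃ v ∈ c.supp ∩ range Sum.inr,
      (colorSubgraph G χ 1).Adj u v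
  · obtain ⟨u, hu, v, hv, huv⟩ := hblue
    obtain ⟨h₁, h₁'⟩ := hmiss inter_subset_right sdiff_subset
      fun x hx y hy hxy => (colorSubgraph_one_adj_of_notMem_supp hy.2 hx.1 hxy.symm).symm
    obtain ⟨h₂, h₂'⟩ := hmiss sdiff_subset inter_subset_right
      fun x hx y hy hxy => colorSubgraph_one_adj_of_notMem_supp hx.2 hy.1 hxy
    refine (hasConnMatching_of_missesAtMost_of_adj ?_ ?_ ?_ h₁ h₁' h₂ h₂' (by linarith)
      (by linarith) (by linarith) (by linarith) (.inl hu) (.inr hv) huv).mono ?_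
    · exact disjoint_sdiff_right.mono_left inter_subset_left
    · exact disjoint_sdiff_left.mono_right inter_subset_left
    · have := (isCompl_range_inl_range_inr (α := Fin N) (β := Fin N)).disjoint
      tauto_set
    · calc (2 + 8 * ξ) * k' = 2 * (1 / 2 * (1 + 4 * ξ) * k') + 2 * (1 / 2 * (1 + 4 * ξ) * k') := by
            ring
        _ ≤ _ := by push_cast; gcongr <;> apply le_min <;> linarith
  · obtain ⟨h, h'⟩ := hmiss inter_subset_right inter_subset_right fun x hx y hy hxy =>
      (colorSubgraph_adj_zero_or_one hxy).resolve_right fun h => hblue ⟨x, hx, y, hy, h⟩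
    obtain ⟨M, hM, hMsub, hMcard⟩ := h.exists_isMatching
      (isCompl_range_inl_range_inr.disjoint.mono inter_subset_right inter_subset_right) h'
      (by push_cast; exact le_max_of_le_left (by linarith))
    refine (hnoRed ⟨M, hM, hMsub.trans (union_subset inter_subset_left inter_subset_left), ?_⟩).elim
    rw [hMcard]
    push_cast
    linarith [le_min hC₁ hC₂]

/-- Claim: let `F₁` (with vertex set `C`) be a largest monochromatic component, red,
containing no matching saturating at least `(2 + 0.1ξ)k'` vertices.  If
`|V_s \ C| ≥ (1/2)(1+4ξ)k'` and `|C ∩ V_s| ≥ (1+4ξ)k'` for each `s = 1, 2`, then the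
blue subgraph contains a connected matching saturating at least `(2+8ξ)k'` vertices. -/
theorem blue_connected_matching_from_largest_red_component (ξ : ℝ) (hξ0 : 0 < ξ)
    (hξ1 : ξ ≤ 1 / 1000) :
    ∃ K₀ : ℝ, ∀ k' : ℝ, K₀ ≤ k' → ∀ N : ℕ, (N : ℝ) = (2 + 8 * ξ) * k' →
      ∀ G : SimpleGraph (Fin N ⊕ Fin N), G ≤ completeBipartiteGraph (Fin N) (Fin N) →
      (∀ v, (7 / 8 + ξ) * ((2 + 8 * ξ) * k') ≤ ((G.neighborSet v).ncard : ℝ)) →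
      ∀ χ : Sym2 (Fin N ⊕ Fin N) → Fin 2,
      ∀ c : (colorSubgraph G χ 0).ConnectedComponent,
        -- `F₁` has the largest number of vertices among all monochromatic components
        (∀ (i : Fin 2) (c' : (colorSubgraph G χ i).ConnectedComponent),
          c'.supp.ncard ≤ c.supp.ncard) →
        -- `F₁` contains no matching saturating at least `(2 + 0.1ξ)k'` vertices
        (¬ ∃ M : (colorSubgraph G χ 0).Subgraph, M.IsMatching ∧ M.verts ⊆ c.supp ∧
          (2 + 0.1 * ξ) * k' ≤ (M.verts.ncard : ℝ)) →
        ((1 / 2) * (1 + 4 * ξ) * k' ≤ ((Set.range (Sum.inl : Fin N → Fin N ⊕ Fin N) \ c.supp).ncard : ℝ)) →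
        ((1 / 2) * (1 + 4 * ξ) * k' ≤ ((Set.range (Sum.inr : Fin N → Fin N ⊕ Fin N) \ c.supp).ncard : ℝ)) →
        ((1 + 4 * ξ) * k' ≤ ((c.supp ∩ Set.range (Sum.inl : Fin N → Fin N ⊕ Fin N)).ncard : ℝ)) →
        ((1 + 4 * ξ) * k' ≤ ((c.supp ∩ Set.range (Sum.inr : Fin N → Fin N ⊕ Fin N)).ncard : ℝ)) →
        HasConnMatching (colorSubgraph G χ 1) ((2 + 8 * ξ) * k') :=
  blue_connected_matching_from_largest_red_component_general ξ hξ0
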